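/- arXiv:2604.08392 — 3 statements merged into one kernel-verified Lean document; each statement's English description precedes it below -/
import Mathlib

section
/- Let n, m be positive integers, T a positive integer, A ∈ ℝ^{n×n}, B ∈ ℝ^{n×m}, δ ∈ ℝ. Let u(0), …, u(T−1) ∈ ℝ^m and x(0), …, x(T) ∈ ℝ^n satisfy x(k+1) = A·x(k) + B·u(k) for all 0 ≤ k ≤ T−1, and let X₋, U, X₊ be the matrices whose k-th columns (0 ≤ k ≤ T−1) are x(k), u(k), x(k+1) respectively. Suppose Δ(0) = 0 and for each 0 ≤ k ≤ T−1 there exists g(k) ∈ ℝ^T with X₋·g(k) = Δ(k), U·g(k) = 0, and Δ(k+1) = X₊·g(k) + δ·(x(k) + Δ(k)). Define x̃(k) = x(k) + Δ(k), and let X̃₋ and X̃₊ be the n×T matrices whose k-th columns (0 ≤ k ≤ T−1) are x̃(k) and x̃(k+1) respectively. Then X̃₊ = (A + δ·I)·X̃₋ + B·U; that is, the poisoned dataset (U, X̃₋, X̃₊) is a trajectory of the apparent system with state matrix A + δ·I and input matrix B. -/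
/-!
The recorded data satisfy `X₊ = A X₋ + B U`, so a vector `g` with `X₋ g = Δ(k)` and `U g = 0`
gives `X₊ g = A Δ(k)`. Hence `Δ(k+1) = A Δ(k) + δ x̃(k)`, and adding the true dynamics
`x(k+1) = A x(k) + B u(k)` yields `x̃(k+1) = (A + δ I) x̃(k) + B u(k)` column by column.
-/

open Matrix

section DataMatrix

variable {R ι κ μ : Type*}

def dataMatrix (T : ℕ) (v : ℕ → ι → R) : Matrix ι (Fin T) R :=
  Matrix.of fun i (k : Fin T) => v k i

theorem mul_dataMatrix [NonUnitalNonAssocSemiring R] [Fintype ι] {T : ℕ}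
    (M : Matrix κ ι R) (v : ℕ → ι → R) :
    M * dataMatrix T v = dataMatrix T fun k => M *ᵥ v k := by
  ext i k
  simp only [dataMatrix, mul_apply, of_apply, mulVec, dotProduct]

theorem dataMatrix_eq_mul_add_mul [NonUnitalNonAssocSemiring R] [Fintype ι] [Fintype μ]
    {T : ℕ} {M : Matrix κ ι R} {N : Matrix κ μ R}
    {y : ℕ → κ → R} {v : ℕ → ι → R} {w : ℕ → μ → R}
    (h : ∀ k < T, y k = M *ᵥ v k + N *ᵥ w k) :
    dataMatrix T y = M * dataMatrix T v + N * dataMatrix T w := by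
  rw [mul_dataMatrix, mul_dataMatrix]
  ext i k
  simp only [dataMatrix, Matrix.add_apply, of_apply, h k k.isLt, Pi.add_apply]

end DataMatrix

theorem poisoned_state_succ {R ι μ τ : Type*} [CommRing R]
    [Fintype ι] [DecidableEq ι] [Fintype μ] [Fintype τ]
    {A : Matrix ι ι R} {B : Matrix ι μ R} {Xm Xp : Matrix ι τ R} {U : Matrix μ τ R} {δ : R}
    {x₀ x₁ Δ₀ Δ₁ : ι → R} {u₀ : μ → R} {g : τ → R}
    (hx : x₁ = A *ᵥ x₀ + B *ᵥ u₀) (hXp : Xp = A * Xm + B * U)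
    (hXmg : Xm *ᵥ g = Δ₀) (hUg : U *ᵥ g = 0) (hΔ : Δ₁ = Xp *ᵥ g + δ • (x₀ + Δ₀)) :
    x₁ + Δ₁ = (A + δ • 1) *ᵥ (x₀ + Δ₀) + B *ᵥ u₀ := by
  have hXpg : Xp *ᵥ g = A *ᵥ Δ₀ := by
    rw [hXp, add_mulVec, ← mulVec_mulVec, ← mulVec_mulVec, hXmg, hUg, mulVec_zero, add_zero]
  rw [hx, hΔ, hXpg, add_mulVec, smul_mulVec, one_mulVec, mulVec_add]
  abel

theorem stmt_6_general {n m T : ℕ}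
    (A : Matrix (Fin n) (Fin n) ℝ) (B : Matrix (Fin n) (Fin m) ℝ) (δ : ℝ)
    (u : ℕ → (Fin m → ℝ)) (x : ℕ → (Fin n → ℝ))
    (hdyn : ∀ k < T, x (k + 1) = A.mulVec (x k) + B.mulVec (u k))
    (Xm : Matrix (Fin n) (Fin T) ℝ) (U : Matrix (Fin m) (Fin T) ℝ)
    (Xp : Matrix (Fin n) (Fin T) ℝ)
    (hXm : Xm = Matrix.of fun i (k : Fin T) => x k i)
    (hU : U = Matrix.of fun i (k : Fin T) => u k i)
    (hXp : Xp = Matrix.of fun i (k : Fin T) => x (k + 1) i)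
    (Δ : ℕ → (Fin n → ℝ))
    (hrec : ∀ k < T, ∃ g : Fin T → ℝ,
      Xm.mulVec g = Δ k ∧ U.mulVec g = 0 ∧
      Δ (k + 1) = Xp.mulVec g + δ • (x k + Δ k))
    (xt : ℕ → (Fin n → ℝ))
    (hxt : ∀ k, xt k = x k + Δ k)
    (Xmt Xpt : Matrix (Fin n) (Fin T) ℝ)
    (hXmt : Xmt = Matrix.of fun i (k : Fin T) => xt k i)
    (hXpt : Xpt = Matrix.of fun i (k : Fin T) => xt (k + 1) i) :
    Xpt = (A + δ • (1 : Matrix (Fin n) (Fin n) ℝ)) * Xmt + B * U := by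
  have hdata : Xp = A * Xm + B * U := by
    rw [hXp, hXm, hU]
    exact dataMatrix_eq_mul_add_mul (y := fun k => x (k + 1)) hdyn
  have hpoisoned : ∀ k < T, xt (k + 1) = (A + δ • 1) *ᵥ xt k + B *ᵥ u k := by
    intro k hk
    obtain ⟨g, hXmg, hUg, hΔ⟩ := hrec k hk
    rw [hxt, hxt]
    exact poisoned_state_succ (hdyn k hk) hdata hXmg hUg hΔ
  rw [hXpt, hXmt, hU]
  exact dataMatrix_eq_mul_add_mul (y := fun k => xt (k + 1)) hpoisoned

theorem stmt_6 {n m T : ℕ} (hn : 0 < n) (hm : 0 < m) (hT : 0 < T)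
    (A : Matrix (Fin n) (Fin n) ℝ) (B : Matrix (Fin n) (Fin m) ℝ) (δ : ℝ)
    (u : ℕ → (Fin m → ℝ)) (x : ℕ → (Fin n → ℝ))
    (hdyn : ∀ k < T, x (k + 1) = A.mulVec (x k) + B.mulVec (u k))
    (Xm : Matrix (Fin n) (Fin T) ℝ) (U : Matrix (Fin m) (Fin T) ℝ)
    (Xp : Matrix (Fin n) (Fin T) ℝ)
    (hXm : Xm = Matrix.of fun i (k : Fin T) => x k i)
    (hU : U = Matrix.of fun i (k : Fin T) => u k i)
    (hXp : Xp = Matrix.of fun i (k : Fin T) => x (k + 1) i)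
    (Δ : ℕ → (Fin n → ℝ))
    (hΔ0 : Δ 0 = 0)
    (hrec : ∀ k < T, ∃ g : Fin T → ℝ,
      Xm.mulVec g = Δ k ∧ U.mulVec g = 0 ∧
      Δ (k + 1) = Xp.mulVec g + δ • (x k + Δ k))
    (xt : ℕ → (Fin n → ℝ))
    (hxt : ∀ k, xt k = x k + Δ k)
    (Xmt Xpt : Matrix (Fin n) (Fin T) ℝ)
    (hXmt : Xmt = Matrix.of fun i (k : Fin T) => xt k i)
    (hXpt : Xpt = Matrix.of fun i (k : Fin T) => xt (k + 1) i) :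
    Xpt = (A + δ • (1 : Matrix (Fin n) (Fin n) ℝ)) * Xmt + B * U :=
  stmt_6_general A B δ u x hdyn Xm U Xp hXm hU hXp Δ hrec xt hxt Xmt Xpt hXmt hXpt
end

section
/- Let n, m, T be positive integers, A ∈ ℝ^{n×n}, B ∈ ℝ^{n×m}, and let X₋ ∈ ℝ^{n×T}, U ∈ ℝ^{m×T}, X₊ ∈ ℝ^{n×T} satisfy X₊ = A·X₋ + B·U. Let δ ∈ ℝ with |δ| ≥ 2 and let G_map ∈ ℝ^{T×T} satisfy U·G_map = U. Define the poisoned Hankel matrices X̃₋ = X₋·G_map and X̃₊ = (X₊ + δ·X₋)·G_map. If G̃ ∈ ℝ^{T×n} satisfies X̃₋·G̃ = Iₙ and the apparent closed-loop matrix X̃₊·G̃ is Schur stable, then every eigenvalue of A + B·(U·G̃) over ℂ has modulus strictly greater than 1. -/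
open Matrix

/-!
Since `U * Gmap = U` and `Xm * Gmap * Gt = 1`, the apparent closed-loop matrix `Xpt * Gt` equals
`K + δ • 1`, where `K = A + B * (U * Gt)` is the true closed loop. Its spectrum is that of `K`
shifted by `δ`, so an eigenvalue `μ` of `K` gives `‖δ + μ‖ < 1`, hence `‖μ‖ > |δ| - 1 ≥ 1`.
-/

/-- A real square matrix is Schur stable if every eigenvalue over ℂ has modulus < 1. -/
def SchurStable {n : ℕ} (M : Matrix (Fin n) (Fin n) ℝ) : Prop :=
  ∀ μ ∈ spectrum ℂ (M.map Complex.ofReal), ‖μ‖ < 1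

section ClosedLoop

variable {R : Type*} [CommRing R] {n m T : Type*} [Fintype n] [DecidableEq n] [Fintype m]
  [Fintype T]

theorem poisoned_closedLoop_eq (A : Matrix n n R) (B : Matrix n m R) (Xm : Matrix n T R)
    (U : Matrix m T R) (δ : R) (Gmap : Matrix T T R) (hGmap : U * Gmap = U)
    (Gt : Matrix T n R) (hGt : Xm * Gmap * Gt = 1) :
    (A * Xm + B * U + δ • Xm) * Gmap * Gt = A + B * (U * Gt) + δ • 1 := by
  simp only [Matrix.add_mul, Matrix.smul_mul, Matrix.mul_assoc, hGmap]
  simp only [← Matrix.mul_assoc Xm, hGt, Matrix.mul_one]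

end ClosedLoop

theorem add_mem_spectrum_map_add_smul_one {n : Type*} [Fintype n] [DecidableEq n]
    (K : Matrix n n ℝ) (δ : ℝ) {μ : ℂ} (hμ : μ ∈ spectrum ℂ (K.map Complex.ofReal)) :
    (δ : ℂ) + μ ∈ spectrum ℂ ((K + δ • 1).map Complex.ofReal) := by
  have hmap : (K + δ • 1).map Complex.ofReal = algebraMap ℂ _ (δ : ℂ) + K.map Complex.ofReal := by
    ext i j
    simp [Matrix.algebraMap_matrix_apply, Matrix.one_apply, apply_ite Complex.ofReal, add_comm]
  rw [hmap, ← spectrum.singleton_add_eq]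
  exact Set.add_mem_add rfl hμ

theorem one_lt_norm_of_norm_add_lt_one {E : Type*} [SeminormedAddCommGroup E] {a b : E}
    (ha : 2 ≤ ‖a‖) (hab : ‖a + b‖ < 1) : 1 < ‖b‖ := by
  have : ‖a‖ ≤ ‖a + b‖ + ‖b‖ := by simpa using norm_sub_le (a + b) b
  linarith

theorem stmt_8_general {n m T : ℕ}
    (A : Matrix (Fin n) (Fin n) ℝ) (B : Matrix (Fin n) (Fin m) ℝ)
    (Xm Xp : Matrix (Fin n) (Fin T) ℝ) (U : Matrix (Fin m) (Fin T) ℝ)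
    (hdata : Xp = A * Xm + B * U)
    (δ : ℝ) (hδ : 2 ≤ |δ|)
    (Gmap : Matrix (Fin T) (Fin T) ℝ)
    (hGmap : U * Gmap = U)
    (Xmt Xpt : Matrix (Fin n) (Fin T) ℝ)
    (hXmt : Xmt = Xm * Gmap)
    (hXpt : Xpt = (Xp + δ • Xm) * Gmap)
    (Gt : Matrix (Fin T) (Fin n) ℝ)
    (hGt : Xmt * Gt = 1)
    (happarent : SchurStable (Xpt * Gt)) :
    ∀ μ ∈ spectrum ℂ ((A + B * (U * Gt)).map Complex.ofReal), 1 < ‖μ‖ := by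
  intro μ hμ
  subst hdata hXmt hXpt
  rw [poisoned_closedLoop_eq A B Xm U δ Gmap hGmap Gt hGt] at happarent
  refine one_lt_norm_of_norm_add_lt_one (a := (δ : ℂ)) ?_ (happarent _ ?_)
  · rwa [Complex.norm_real, Real.norm_eq_abs]
  · exact add_mem_spectrum_map_add_smul_one _ δ hμ

theorem stmt_8 {n m T : ℕ} (hn : 0 < n) (hm : 0 < m) (hT : 0 < T)
    (A : Matrix (Fin n) (Fin n) ℝ) (B : Matrix (Fin n) (Fin m) ℝ)
    (Xm Xp : Matrix (Fin n) (Fin T) ℝ) (U : Matrix (Fin m) (Fin T) ℝ)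
    (hdata : Xp = A * Xm + B * U)
    (δ : ℝ) (hδ : 2 ≤ |δ|)
    (Gmap : Matrix (Fin T) (Fin T) ℝ)
    (hGmap : U * Gmap = U)
    (Xmt Xpt : Matrix (Fin n) (Fin T) ℝ)
    (hXmt : Xmt = Xm * Gmap)
    (hXpt : Xpt = (Xp + δ • Xm) * Gmap)
    (Gt : Matrix (Fin T) (Fin n) ℝ)
    (hGt : Xmt * Gt = 1)
    (happarent : SchurStable (Xpt * Gt)) :
    ∀ μ ∈ spectrum ℂ ((A + B * (U * Gt)).map Complex.ofReal), 1 < ‖μ‖ :=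
  stmt_8_general A B Xm Xp U hdata δ hδ Gmap hGmap Xmt Xpt hXmt hXpt Gt hGt happarent
end

section
/- Let n, m, T be positive integers, A ∈ ℝ^{n×n}, B ∈ ℝ^{n×m}, and let X₋ ∈ ℝ^{n×T}, U ∈ ℝ^{m×T}, X₊ ∈ ℝ^{n×T} satisfy X₊ = A·X₋ + B·U. Then there exists a poisoned matrix X̃₊ ∈ ℝ^{n×T} (namely X̃₊ = X₊ + 2·X₋) with the property that for every G ∈ ℝ^{T×n} satisfying X₋·G = Iₙ such that X̃₊·G is Schur stable, the matrix A + B·(U·G) is not Schur stable. In other words, a destabilizing data-poisoning attack always exists, independently of the system matrices A and B. -/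
open Matrix

/-!
Poisoning the successor data by `2 X₋` shifts the identified closed loop `X̃₊ G` to
`(A + B U G) + 2 I`, whose eigenvalues are those of `A + B U G` moved by `2`. An eigenvalue `μ`
with `‖μ‖ < 1` and `‖μ + 2‖ < 1` would violate the triangle inequality, and a complex matrix of
positive size has an eigenvalue.
-/

theorem mul_eq_of_data_of_mul_eq_one {ι κ τ R : Type*} [Fintype ι] [Fintype κ] [Fintype τ]
    [DecidableEq ι] [Semiring R] {A : Matrix ι ι R} {B : Matrix ι κ R}
    {Xm Xp : Matrix ι τ R} {U : Matrix κ τ R} {G : Matrix τ ι R}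
    (hdata : Xp = A * Xm + B * U) (hG : Xm * G = 1) :
    Xp * G = A + B * (U * G) := by
  rw [hdata, Matrix.add_mul, Matrix.mul_assoc, hG, Matrix.mul_one, Matrix.mul_assoc]

theorem map_ofReal_add_smul_one {n : ℕ} (M : Matrix (Fin n) (Fin n) ℝ) (c : ℝ) :
    (M + c • 1).map Complex.ofReal = algebraMap ℂ _ (c : ℂ) + M.map Complex.ofReal := by
  rw [add_comm, Algebra.algebraMap_eq_smul_one]
  ext i j
  by_cases h : i = j <;> simp [one_apply, h]

theorem not_schurStable_add_smul_one {n : ℕ} (hn : 0 < n) {M : Matrix (Fin n) (Fin n) ℝ}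
    (hM : SchurStable M) {c : ℝ} (hc : 2 ≤ |c|) : ¬ SchurStable (M + c • 1) := by
  intro hMc
  have : NeZero n := ⟨hn.ne'⟩
  obtain ⟨μ, hμ⟩ := spectrum.nonempty_of_isAlgClosed_of_finiteDimensional ℂ (M.map Complex.ofReal)
  have hμc : ‖μ + c‖ < 1 := by
    refine hMc _ ?_
    rw [map_ofReal_add_smul_one]
    exact spectrum.add_mem_add_iff.mpr hμ
  have htriangle : |c| ≤ ‖μ + c‖ + ‖μ‖ := by
    simpa [Complex.norm_real] using norm_sub_le (μ + c) μ
  linarith [hM μ hμ]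

theorem stmt_12_general {n m T : ℕ} (hn : 0 < n)
    (A : Matrix (Fin n) (Fin n) ℝ) (B : Matrix (Fin n) (Fin m) ℝ)
    (Xm Xp : Matrix (Fin n) (Fin T) ℝ) (U : Matrix (Fin m) (Fin T) ℝ)
    (hdata : Xp = A * Xm + B * U) :
    ∃ Xpt : Matrix (Fin n) (Fin T) ℝ, Xpt = Xp + (2 : ℝ) • Xm ∧
      ∀ G : Matrix (Fin T) (Fin n) ℝ, Xm * G = 1 →
        SchurStable (Xpt * G) → ¬ SchurStable (A + B * (U * G)) := by
  refine ⟨_, rfl, fun G hG hpoisoned hclosed => ?_⟩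
  have hshift : (Xp + (2 : ℝ) • Xm) * G = A + B * (U * G) + (2 : ℝ) • 1 := by
    rw [Matrix.add_mul, Matrix.smul_mul, hG, mul_eq_of_data_of_mul_eq_one hdata hG]
  exact not_schurStable_add_smul_one hn hclosed (by norm_num) (hshift ▸ hpoisoned)

theorem stmt_12 {n m T : ℕ} (hn : 0 < n) (hm : 0 < m) (hT : 0 < T)
    (A : Matrix (Fin n) (Fin n) ℝ) (B : Matrix (Fin n) (Fin m) ℝ)
    (Xm Xp : Matrix (Fin n) (Fin T) ℝ) (U : Matrix (Fin m) (Fin T) ℝ)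
    (hdata : Xp = A * Xm + B * U) :
    ∃ Xpt : Matrix (Fin n) (Fin T) ℝ, Xpt = Xp + (2 : ℝ) • Xm ∧
      ∀ G : Matrix (Fin T) (Fin n) ℝ, Xm * G = 1 →
        SchurStable (Xpt * G) → ¬ SchurStable (A + B * (U * G)) :=
  stmt_12_general hn A B Xm Xp U hdata
end
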